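/- Consider a PJR-Exact run of an approval-based multi-winner election, fix j with 1 ≤ j ≤ k, and suppose the first j iterations of the run are all normal. Then for each candidate c ∈ C \ W_j with ℓ_j(c) ≥ 1, it holds that Σ_{i : c ∈ A_i and |A_i ∩ W_j| < ℓ_j(c)} ( f^j_i − (ℓ_j(c) − |A_i ∩ W_j| − 1)/ℓ_j(c) ) ≥ q. -/

import Mathlib

open Finset

variable {C : Type*} [Fintype C] [DecidableEq C]

/-- The voters approving candidate `c`. -/
def approvers {n : ℕ} (A : Fin n → Finset C) (c : C) : Finset (Fin n) :=
  Finset.univ.filter (fun i => c ∈ A i)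

/-- The exact quota `q = n / k`. -/
def quota (n k : ℕ) : ℚ := (n : ℚ) / (k : ℚ)

/-- Remaining support of candidate `c` under vote fractions `f`. -/
def supp {n : ℕ} (A : Fin n → Finset C) (f : Fin n → ℚ) (c : C) : ℚ :=
  ∑ i ∈ approvers A c, f i

/-- The set `W_j = {w_1, …, w_j}` of the first `j` winners. -/
def Wset (w : ℕ → C) (j : ℕ) : Finset C := (Finset.Icc 1 j).image w

/-- The candidates approved by every voter in `Ns`, i.e. `⋂_{i ∈ Ns} A i`. -/
def commonApproved {n : ℕ} (A : Fin n → Finset C) (Ns : Finset (Fin n)) : Finset C :=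
  Finset.univ.filter (fun c => ∀ i ∈ Ns, c ∈ A i)

/-- `Ns` is an `ℓ`-cohesive group of voters: `|Ns| ≥ ℓ·n/k` and `|⋂_{i ∈ Ns} A i| ≥ ℓ`. -/
def Cohesive {n : ℕ} (A : Fin n → Finset C) (k ℓ : ℕ) (Ns : Finset (Fin n)) : Prop :=
  (ℓ : ℚ) * (n : ℚ) / (k : ℚ) ≤ (Ns.card : ℚ) ∧ ℓ ≤ (commonApproved A Ns).card

/-- `W` provides proportional justified representation for `(A, k)`. -/
def ProvidesPJR {n : ℕ} (A : Fin n → Finset C) (k : ℕ) (W : Finset C) : Prop :=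
  ∀ ℓ : ℕ, 1 ≤ ℓ → ℓ ≤ k → ∀ Ns : Finset (Fin n), Cohesive A k ℓ Ns →
    ℓ ≤ (W ∩ Ns.biUnion A).card

/-- `W` provides extended justified representation for `(A, k)`. -/
def ProvidesEJR {n : ℕ} (A : Fin n → Finset C) (k : ℕ) (W : Finset C) : Prop :=
  ∀ ℓ : ℕ, 1 ≤ ℓ → ℓ ≤ k → ∀ Ns : Finset (Fin n), Cohesive A k ℓ Ns →
    ∃ i ∈ Ns, ℓ ≤ (A i ∩ W).card

/-- The set of `ℓ`'s satisfying the dissatisfaction-level fixpoint equation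
`ℓ = ⌊(k/n)·|{i : c ∈ A_i ∧ |A_i ∩ W| < ℓ}|⌋`
(natural-number division `k * m / n` is exactly the floor `⌊(k/n)·m⌋`). -/
def dissatSet {n : ℕ} (A : Fin n → Finset C) (k : ℕ) (W : Finset C) (c : C) : Set ℕ :=
  {ℓ : ℕ | ℓ = k * (Finset.univ.filter (fun i => c ∈ A i ∧ (A i ∩ W).card < ℓ)).card / n}

/-- The dissatisfaction level `ℓ(c, W)`: the largest non-negative integer satisfying
the fixpoint equation. -/
noncomputable def dissat {n : ℕ} (A : Fin n → Finset C) (k : ℕ) (W : Finset C) (c : C) : ℕ :=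
  sSup (dissatSet A k W c)

/-- `ℓ_W(i, c) = max_{c' ∈ A_i \ (W ∪ {c})} ℓ(c', W)` (with `max ∅ = 0`). -/
noncomputable def dissatVoter {n : ℕ} (A : Fin n → Finset C) (k : ℕ) (W : Finset C)
    (i : Fin n) (c : C) : ℕ :=
  (A i \ insert c W).sup (dissat A k W)

/-- `ℓ_W(i) = max_{c ∈ A_i \ W} ℓ(c, W)` (with `max ∅ = 0`). -/
noncomputable def dissatVoterAll {n : ℕ} (A : Fin n → Finset C) (k : ℕ) (W : Finset C)
    (i : Fin n) : ℕ :=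
  (A i \ W).sup (dissat A k W)

/-- `g_i(c)` relative to the committee `W`. -/
noncomputable def gfun {n : ℕ} (A : Fin n → Finset C) (k : ℕ) (W : Finset C)
    (i : Fin n) (c : C) : ℚ :=
  if dissatVoter A k W i c ≤ (A i ∩ W).card then 0
  else ((dissatVoter A k W i c : ℚ) - ((A i ∩ W).card : ℚ) - 1) / (dissatVoter A k W i c : ℚ)

/-- Candidate `c ∉ W` is in a normal state (w.r.t. committee `W` and fractions `f`). -/
def NormalState {n : ℕ} (A : Fin n → Finset C) (k : ℕ) (f : Fin n → ℚ) (W : Finset C)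
    (c : C) : Prop :=
  (∀ i : Fin n, c ∈ A i → (A i ∩ W).card < dissatVoter A k W i c →
      ((dissatVoter A k W i c : ℚ) - ((A i ∩ W).card : ℚ)) / (dissatVoter A k W i c : ℚ) ≤ f i) ∧
  quota n k ≤ ∑ i ∈ approvers A c, (f i - gfun A k W i c)

/-- Candidate `c ∉ W` is in a starving state. -/
def StarvingState {n : ℕ} (A : Fin n → Finset C) (k : ℕ) (f : Fin n → ℚ) (W : Finset C)
    (c : C) : Prop :=
  ∃ i : Fin n, c ∈ A i ∧ (A i ∩ W).card < dissatVoter A k W i c ∧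
    f i < ((dissatVoter A k W i c : ℚ) - ((A i ∩ W).card : ℚ)) / (dissatVoter A k W i c : ℚ)

/-- Candidate `c ∉ W` is in an eager state. -/
def EagerState {n : ℕ} (A : Fin n → Finset C) (k : ℕ) (f : Fin n → ℚ) (W : Finset C)
    (c : C) : Prop :=
  ¬ StarvingState A k f W c ∧ quota n k ≤ supp A f c ∧
    ∑ i ∈ approvers A c, (f i - gfun A k W i c) < quota n k

/-- A run of a voting rule in the PJR-Exact family: a sequence of distinct winners
`w 1, …, w k` together with fraction functions `f 0, …, f k` satisfying the three
defining conditions of the family. -/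
structure PJRExactRun (n k : ℕ) (A : Fin n → Finset C) where
  w : ℕ → C
  f : ℕ → Fin n → ℚ
  /-- the selected candidates are pairwise distinct -/
  w_inj : ∀ j j' : ℕ, 1 ≤ j → j ≤ k → 1 ≤ j' → j' ≤ k → w j = w j' → j = j'
  /-- initially each voter has her whole vote -/
  f_zero : ∀ i, f 0 i = 1
  /-- fractions stay non-negative -/
  f_nonneg : ∀ j, 1 ≤ j → j ≤ k → ∀ i, 0 ≤ f j i
  /-- fractions never increase -/
  f_mono : ∀ j, 1 ≤ j → j ≤ k → ∀ i, f j i ≤ f (j - 1) i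
  /-- if the remaining support of the winner exceeds the quota, exactly `q` votes are removed -/
  remove_big : ∀ j, 1 ≤ j → j ≤ k → quota n k < supp A (f (j - 1)) (w j) →
    ∑ i ∈ approvers A (w j), (f (j - 1) i - f j i) = quota n k
  /-- if the remaining support of the winner is at most the quota, all of it is removed -/
  remove_small : ∀ j, 1 ≤ j → j ≤ k → supp A (f (j - 1)) (w j) ≤ quota n k →
    ∀ i, w j ∈ A i → f j i = 0
  /-- voters not approving the winner keep their fractions -/
  f_untouched : ∀ j, 1 ≤ j → j ≤ k → ∀ i, w j ∉ A i → f j i = f (j - 1) i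
  /-- if some unelected candidate has remaining support at least `q`,
  then so has the selected one -/
  greedy : ∀ j, 1 ≤ j → j ≤ k →
    (∃ c, c ∉ Wset w (j - 1) ∧ quota n k ≤ supp A (f (j - 1)) c) →
    quota n k ≤ supp A (f (j - 1)) (w j)

/-- Iteration `j` of a PJR-Exact run is normal. -/
def NormalIteration {n k : ℕ} {A : Fin n → Finset C} (R : PJRExactRun n k A) (j : ℕ) : Prop :=
  NormalState A k (R.f (j - 1)) (Wset R.w (j - 1)) (R.w j) ∧
  ∀ i : Fin n, R.w j ∈ A i →
    (A i ∩ Wset R.w (j - 1)).card < dissatVoter A k (Wset R.w (j - 1)) i (R.w j) →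
    ((dissatVoter A k (Wset R.w (j - 1)) i (R.w j) : ℚ) - ((A i ∩ Wset R.w j).card : ℚ)) /
      (dissatVoter A k (Wset R.w (j - 1)) i (R.w j) : ℚ) ≤ R.f j i

/-! Normal iterations maintain the following invariant: a voter `i` approving an unelected
candidate `c` with `r = |A_i ∩ W| < ℓ = ℓ(c, W)` keeps at least `(ℓ - r)/ℓ` of her vote.
It holds for `W = ∅`; when the winner `w` is approved by `i`, normality of the iteration
gives it, because `ℓ(c, W)` only decreases as `W` grows and is at most `ℓ_W(i, w)`; the other
voters are untouched. Each voter counted in the sum thus contributes at least `1/ℓ`, and the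
fixpoint equation defining `ℓ` says there are at least `ℓ n / k` of them. -/

omit [Fintype C]

lemma sub_div_self_le_sub_div_self {α : Type*} [Field α] [LinearOrder α] [IsStrictOrderedRing α]
    {r a b : α} (hr : 0 ≤ r) (ha : 0 < a) (hab : a ≤ b) : (a - r) / a ≤ (b - r) / b := by
  rw [div_le_div_iff₀ ha (ha.trans_le hab)]
  nlinarith

lemma Nat.exists_fixedPoint_ge_of_le_apply {F : ℕ → ℕ} (hF : Monotone F) {k : ℕ}
    (hFk : ∀ x, F x ≤ k) {ℓ : ℕ} (hℓ : ℓ ≤ F ℓ) : ∃ y, ℓ ≤ y ∧ F y = y := by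
  -- the largest post-fixpoint below `k` is a fixpoint
  let P : ℕ → Prop := fun x => x ≤ F x
  have hℓy : ℓ ≤ Nat.findGreatest P k := Nat.le_findGreatest (hℓ.trans (hFk ℓ)) hℓ
  have hy : P (Nat.findGreatest P k) := Nat.findGreatest_spec (hℓ.trans (hFk ℓ)) hℓ
  have hFy : F (Nat.findGreatest P k) ≤ Nat.findGreatest P k :=
    Nat.le_findGreatest (hFk _) (hF hy)
  exact ⟨_, hℓy, hFy.antisymm hy⟩

section Dissatisfaction

variable {n : ℕ} (A : Fin n → Finset C) (k : ℕ)

/-- `dissatSet A k W c` is by definition the set of fixpoints of this map. -/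
def dissatMap (W : Finset C) (c : C) (ℓ : ℕ) : ℕ :=
  k * (Finset.univ.filter (fun i => c ∈ A i ∧ (A i ∩ W).card < ℓ)).card / n

lemma dissatMap_le (W : Finset C) (c : C) (ℓ : ℕ) : dissatMap A k W c ℓ ≤ k := by
  refine Nat.div_le_of_le_mul ?_
  rw [mul_comm n]
  exact Nat.mul_le_mul_left k ((card_filter_le _ _).trans_eq (card_fin n))

lemma dissatMap_mono (W : Finset C) (c : C) : Monotone (dissatMap A k W c) := by
  intro a b hab
  unfold dissatMap
  gcongr

lemma dissatMap_anti_committee {W W' : Finset C} (hW : W ⊆ W') (c : C) (ℓ : ℕ) :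
    dissatMap A k W' c ℓ ≤ dissatMap A k W c ℓ := by
  unfold dissatMap
  gcongr

lemma dissatSet_bddAbove (W : Finset C) (c : C) : BddAbove (dissatSet A k W c) :=
  ⟨k, fun ℓ hℓ => hℓ ▸ dissatMap_le A k W c ℓ⟩

lemma dissat_eq_dissatMap (W : Finset C) (c : C) :
    dissatMap A k W c (dissat A k W c) = dissat A k W c := by
  have hzero : (0 : ℕ) ∈ dissatSet A k W c := by simp [dissatSet]
  exact (Nat.sSup_mem ⟨0, hzero⟩ (dissatSet_bddAbove A k W c)).symm

lemma le_dissat_of_le_dissatMap {W : Finset C} {c : C} {ℓ : ℕ}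
    (h : ℓ ≤ dissatMap A k W c ℓ) : ℓ ≤ dissat A k W c := by
  obtain ⟨y, hℓy, hy⟩ :=
    Nat.exists_fixedPoint_ge_of_le_apply (dissatMap_mono A k W c) (dissatMap_le A k W c) h
  exact hℓy.trans (le_csSup (dissatSet_bddAbove A k W c) hy.symm)

lemma dissat_anti {W W' : Finset C} (hW : W ⊆ W') (c : C) :
    dissat A k W' c ≤ dissat A k W c :=
  le_dissat_of_le_dissatMap A k <|
    (dissat_eq_dissatMap A k W' c).ge.trans (dissatMap_anti_committee A k hW c _)

lemma quota_le_card_div_dissat {W : Finset C} {c : C} (hℓ : 1 ≤ dissat A k W c) :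
    quota n k ≤ (((approvers A c).filter
      (fun i => (A i ∩ W).card < dissat A k W c)).card : ℚ) / dissat A k W c := by
  have hfix : k * ((approvers A c).filter
      (fun i => (A i ∩ W).card < dissat A k W c)).card / n = dissat A k W c := by
    rw [approvers, filter_filter]
    exact dissat_eq_dissatMap A k W c
  set ℓ := dissat A k W c
  set m := ((approvers A c).filter (fun i => (A i ∩ W).card < ℓ)).card
  have hn : 0 < n := Nat.pos_of_ne_zero fun h => by simp [h] at hfix; omega
  have hmul : ℓ * n ≤ k * m := (Nat.le_div_iff_mul_le hn).1 hfix.ge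
  have hk : 0 < k := Nat.pos_of_ne_zero fun h => by simp [h] at hmul; omega
  rw [quota, div_le_div_iff₀ (by exact_mod_cast hk) (by exact_mod_cast hℓ)]
  exact_mod_cast (by linarith : n * ℓ ≤ m * k)

end Dissatisfaction

section Reserve

variable {n : ℕ} (A : Fin n → Finset C) (k : ℕ)

def KeepsReserve (W : Finset C) (f : Fin n → ℚ) : Prop :=
  ∀ i c, c ∈ A i → c ∉ W → (A i ∩ W).card < dissat A k W c →
    ((dissat A k W c : ℚ) - (A i ∩ W).card) / dissat A k W c ≤ f i

lemma keepsReserve_empty : KeepsReserve A k ∅ (fun _ => 1) := by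
  intro i c _ _ hpos
  have hℓ : (dissat A k ∅ c : ℚ) ≠ 0 := by
    exact_mod_cast (hpos.trans_le' (Nat.zero_le _)).ne'
  simp [div_self hℓ]

variable {A k}

lemma KeepsReserve.insert_winner {W : Finset C} {w : C} {f f' : Fin n → ℚ}
    (h : KeepsReserve A k W f)
    (happroves : ∀ i, w ∈ A i → (A i ∩ W).card < dissatVoter A k W i w →
      ((dissatVoter A k W i w : ℚ) - (A i ∩ insert w W).card) / dissatVoter A k W i w ≤ f' i)
    (huntouched : ∀ i, w ∉ A i → f' i = f i) :
    KeepsReserve A k (insert w W) f' := by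
  intro i c hc hcW hlt
  obtain ⟨hcw, hcW⟩ : c ≠ w ∧ c ∉ W := by simpa only [mem_insert, not_or] using hcW
  have hℓ : dissat A k (insert w W) c ≤ dissat A k W c := dissat_anti A k (subset_insert w W) c
  have hℓpos : (0 : ℚ) < dissat A k (insert w W) c := by
    exact_mod_cast hlt.trans_le' (Nat.zero_le _)
  by_cases hw : w ∈ A i
  · have hL : dissat A k W c ≤ dissatVoter A k W i w :=
      le_sup (f := dissat A k W) (mem_sdiff.2 ⟨hc, by simp [hcw, hcW]⟩)
    have hr : (A i ∩ W).card ≤ (A i ∩ insert w W).card :=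
      card_le_card (inter_subset_inter_left (subset_insert w W))
    exact (sub_div_self_le_sub_div_self (Nat.cast_nonneg _) hℓpos
      (by exact_mod_cast hℓ.trans hL)).trans (happroves i hw (by omega))
  · rw [inter_insert_of_notMem hw] at hlt ⊢
    rw [huntouched i hw]
    exact (sub_div_self_le_sub_div_self (Nat.cast_nonneg _) hℓpos (by exact_mod_cast hℓ)).trans
      (h i c hc hcW (hlt.trans_le hℓ))

end Reserve

lemma Wset_succ (w : ℕ → C) (j : ℕ) : Wset w (j + 1) = insert (w (j + 1)) (Wset w j) := by
  rw [Wset, Wset, ← insert_Icc_right_eq_Icc_add_one (by omega), image_insert]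

lemma PJRExactRun.keepsReserve {n k : ℕ} {A : Fin n → Finset C} (R : PJRExactRun n k A)
    {j : ℕ} (hjk : j ≤ k)
    (hnormal : ∀ j' : ℕ, 1 ≤ j' → j' ≤ j → NormalIteration R j') :
    KeepsReserve A k (Wset R.w j) (R.f j) := by
  induction j with
  | zero =>
    rw [show R.f 0 = fun _ => 1 from funext R.f_zero, Wset, Icc_eq_empty (by omega), image_empty]
    exact keepsReserve_empty A k
  | succ j ih =>
    have happroves := (hnormal (j + 1) (by omega) le_rfl).2
    rw [Nat.add_sub_cancel, Wset_succ] at happroves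
    rw [Wset_succ]
    exact (ih (by omega) fun j' h1 h2 => hnormal j' h1 (by omega)).insert_winner happroves
      (R.f_untouched (j + 1) (by omega) hjk)

theorem normal_iterations_support_bound_general {C : Type*} [DecidableEq C] {n k : ℕ}
    (A : Fin n → Finset C) (R : PJRExactRun n k A)
    (j : ℕ) (hjk : j ≤ k)
    (hnormal : ∀ j' : ℕ, 1 ≤ j' → j' ≤ j → NormalIteration R j') :
    ∀ c : C, c ∉ Wset R.w j → 1 ≤ dissat A k (Wset R.w j) c →
      quota n k ≤
        ∑ i ∈ (approvers A c).filter
            (fun i => (A i ∩ Wset R.w j).card < dissat A k (Wset R.w j) c),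
          (R.f j i -
            ((dissat A k (Wset R.w j) c : ℚ) - ((A i ∩ Wset R.w j).card : ℚ) - 1) /
              (dissat A k (Wset R.w j) c : ℚ)) := by
  intro c hc hℓ
  set W := Wset R.w j
  set ℓ := dissat A k W c
  calc quota n k
      ≤ (((approvers A c).filter (fun i => (A i ∩ W).card < ℓ)).card : ℚ) / ℓ :=
        quota_le_card_div_dissat A k hℓ
    _ = ∑ i ∈ (approvers A c).filter (fun i => (A i ∩ W).card < ℓ), 1 / (ℓ : ℚ) := by
        rw [sum_const, nsmul_eq_mul, mul_one_div]
    _ ≤ _ := by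
        refine sum_le_sum fun i hi => ?_
        obtain ⟨hcA, hlt⟩ := mem_filter.1 hi
        have hreserve := R.keepsReserve hjk hnormal i c (mem_filter.1 hcA).2 hc hlt
        have hsplit : ((ℓ : ℚ) - (A i ∩ W).card - 1) / ℓ =
            ((ℓ : ℚ) - (A i ∩ W).card) / ℓ - 1 / ℓ := by ring
        linarith

/-- Lemma 3 of the paper: after `j` normal iterations, every unelected
candidate `c` with `ℓ_j(c) ≥ 1` satisfies
`Σ_{i : c ∈ A_i, |A_i ∩ W_j| < ℓ_j(c)} (f^j_i − (ℓ_j(c) − |A_i ∩ W_j| − 1)/ℓ_j(c)) ≥ q`. -/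
theorem normal_iterations_support_bound {C : Type*} [Fintype C] [DecidableEq C] {n k : ℕ}
    (hn : 0 < n) (hk : 1 ≤ k) (hkC : k ≤ Fintype.card C)
    (A : Fin n → Finset C) (R : PJRExactRun n k A)
    (j : ℕ) (hj1 : 1 ≤ j) (hjk : j ≤ k)
    (hnormal : ∀ j' : ℕ, 1 ≤ j' → j' ≤ j → NormalIteration R j') :
    ∀ c : C, c ∉ Wset R.w j → 1 ≤ dissat A k (Wset R.w j) c →
      quota n k ≤
        ∑ i ∈ (approvers A c).filter
            (fun i => (A i ∩ Wset R.w j).card < dissat A k (Wset R.w j) c),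
          (R.f j i -
            ((dissat A k (Wset R.w j) c : ℚ) - ((A i ∩ Wset R.w j).card : ℚ) - 1) /
              (dissat A k (Wset R.w j) c : ℚ)) :=
  normal_iterations_support_bound_general A R j hjk hnormal
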